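/- Let H be a reduced, commutative, cancellative, atomic monoid. Then c_adj(a) ≥ μ_adj(a) for every a ∈ H, and c_adj(H) = μ_adj(H). -/

import Mathlib

namespace CMR

variable {α : Type*} [CancelCommMonoid α]

/-- The factorization monoid `Z(H)`: the free abelian monoid over the set of atoms of `H`,
modeled as multisets of atoms. -/
abbrev Fac (α : Type*) [CancelCommMonoid α] : Type _ := Multiset {u : α // Irreducible u}

/-- The factorization homomorphism `π : Z(H) → H`. -/
def piF (z : Fac α) : α := (z.map Subtype.val).prod

/-- `Z a`: the set of factorizations of `a`. -/
def Z (a : α) : Set (Fac α) := {z | piF z = a}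

/-- `L a`: the set of lengths of `a`. -/
def L (a : α) : Set ℕ := {n | ∃ z ∈ Z a, Multiset.card z = n}

/-- `Zk a k`: the factorizations of `a` of length `k`. -/
def Zk (a : α) (k : ℕ) : Set (Fac α) := {z ∈ Z a | Multiset.card z = k}

/-- `ZM a M`: the factorizations of `a` whose length lies in `M`. -/
def ZM (a : α) (M : Set ℕ) : Set (Fac α) := {z ∈ Z a | Multiset.card z ∈ M}

/-- The distance between two factorizations:
`d(z,z') = max (|z / gcd(z,z')|, |z' / gcd(z,z')|)`. -/
noncomputable def d (z z' : Fac α) : ℕ :=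
  letI := Classical.decEq {u : α // Irreducible u}
  max (Multiset.card (z - z')) (Multiset.card (z' - z))

/-- The distance between two sets of factorizations, the minimum of pairwise
distances (with the convention `sInf ∅ = 0`). -/
noncomputable def dS (X Y : Set (Fac α)) : ℕ :=
  sInf {n : ℕ | ∃ x ∈ X, ∃ y ∈ Y, d x y = n}

/-- `k` and `l` are adjacent lengths of `a` (with `k < l`):
`L(a) ∩ [k, l] = {k, l}`. -/
def Adjacent (a : α) (k l : ℕ) : Prop :=
  k ∈ L a ∧ l ∈ L a ∧ k < l ∧ ∀ m ∈ L a, k ≤ m → m ≤ l → m = k ∨ m = l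

/-- A chain of factorizations of `a` from `z` to `z'` whose consecutive members
satisfy the step predicate `P`. -/
def Chain (a : α) (P : Fac α → Fac α → Prop) (z z' : Fac α) : Prop :=
  ∃ (n : ℕ) (c : Fin (n + 1) → Fac α),
    c 0 = z ∧ c (Fin.last n) = z' ∧ (∀ i, c i ∈ Z a) ∧
    ∀ i : Fin n, P (c i.castSucc) (c i.succ)

/-- The catenary degree of an element: the smallest `N ∈ ℕ∞` such that any two
factorizations of `a` are connected by an `N`-chain. -/
noncomputable def cat (a : α) : ℕ∞ :=
  sInf {N : ℕ∞ | ∀ z ∈ Z a, ∀ z' ∈ Z a,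
    Chain a (fun x y => (d x y : ℕ∞) ≤ N) z z'}

/-- The equal catenary degree of an element: the smallest `N ∈ ℕ∞` such that any two
factorizations of `a` of the same length are connected by an equal-length `N`-chain. -/
noncomputable def ceq (a : α) : ℕ∞ :=
  sInf {N : ℕ∞ | ∀ z ∈ Z a, ∀ z' ∈ Z a, Multiset.card z = Multiset.card z' →
    Chain a (fun x y => (d x y : ℕ∞) ≤ N ∧ Multiset.card x = Multiset.card y) z z'}

/-- The monotone catenary degree of an element: the smallest `N ∈ ℕ∞` such that any two
factorizations of `a` (ordered by length) are connected by a monotone `N`-chain. -/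
noncomputable def cmon (a : α) : ℕ∞ :=
  sInf {N : ℕ∞ | ∀ z ∈ Z a, ∀ z' ∈ Z a, Multiset.card z ≤ Multiset.card z' →
    Chain a (fun x y => (d x y : ℕ∞) ≤ N ∧ Multiset.card x ≤ Multiset.card y) z z'}

/-- The adjacent catenary degree of an element:
`c_adj(a) = sup{d(Z_k(a), Z_l(a)) : k, l ∈ L(a) adjacent}`. -/
noncomputable def cadj (a : α) : ℕ∞ :=
  sSup {r : ℕ∞ | ∃ k l : ℕ, Adjacent a k l ∧ r = (dS (Zk a k) (Zk a l) : ℕ∞)}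

noncomputable def catH (α : Type*) [CancelCommMonoid α] : ℕ∞ := ⨆ a : α, cat a
noncomputable def ceqH (α : Type*) [CancelCommMonoid α] : ℕ∞ := ⨆ a : α, ceq a
noncomputable def cmonH (α : Type*) [CancelCommMonoid α] : ℕ∞ := ⨆ a : α, cmon a
noncomputable def cadjH (α : Type*) [CancelCommMonoid α] : ℕ∞ := ⨆ a : α, cadj a

/-- `gcd(x, y) ≠ 1`: the two factorizations share an atom. -/
def RStep (x y : Fac α) : Prop := ∃ u, u ∈ x ∧ u ∈ y

/-- `z ≈ z'`: there is an `R`-chain concatenating `z` and `z'` in `Z a`. -/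
def RRel (a : α) (z z' : Fac α) : Prop := Chain a RStep z z'

/-- `z ≈_eq z'`: there is an equal-length `R`-chain concatenating `z` and `z'` in `Z a`. -/
def RRelEq (a : α) (z z' : Fac α) : Prop :=
  Chain a (fun x y => RStep x y ∧ Multiset.card x = Multiset.card y) z z'

/-- There is a monotone `R`-chain from `z` to `z'` in `Z a`. -/
def MonRChain (a : α) (z z' : Fac α) : Prop :=
  Chain a (fun x y => RStep x y ∧ Multiset.card x ≤ Multiset.card y) z z'

/-- `μ(a)`: the supremum, over the `R`-classes `ρ` of `Z a`, of the minimal length of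
an element of `ρ`. -/
noncomputable def mu (a : α) : ℕ∞ :=
  sSup {r : ℕ∞ | ∃ z ∈ Z a,
    r = ((sInf {n : ℕ | ∃ z', RRel a z z' ∧ Multiset.card z' = n} : ℕ) : ℕ∞)}

noncomputable def muH (α : Type*) [CancelCommMonoid α] : ℕ∞ := ⨆ a : α, mu a

/-- `μ_eq(a) = sup{k ∈ L(a) : Z_k(a) has more than one ≈_eq-class}`. -/
noncomputable def mueq (a : α) : ℕ∞ :=
  sSup {r : ℕ∞ | ∃ k ∈ L a,
    (∃ z ∈ Zk a k, ∃ z' ∈ Zk a k, ¬ RRelEq a z z') ∧ r = (k : ℕ∞)}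

noncomputable def mueqH (α : Type*) [CancelCommMonoid α] : ℕ∞ := ⨆ a : α, mueq a

/-- `μ_adj(a) = sup{k ∈ L(a) : d(Z_k(a), Z_l(a)) = k for the l ∈ L(a), l < k adjacent to k}`. -/
noncomputable def muadj (a : α) : ℕ∞ :=
  sSup {r : ℕ∞ | ∃ k ∈ L a,
    (∃ l : ℕ, Adjacent a l k ∧ dS (Zk a k) (Zk a l) = k) ∧ r = (k : ℕ∞)}

noncomputable def muadjH (α : Type*) [CancelCommMonoid α] : ℕ∞ := ⨆ a : α, muadj a

/-- The monoid of relations of `H`, as a subset of `Z(H) × Z(H)`. -/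
def relMon (α : Type*) [CancelCommMonoid α] : Set (Fac α × Fac α) :=
  {p | piF p.1 = piF p.2}

/-- The monoid of equal-length relations of `H`. -/
def relMonEq (α : Type*) [CancelCommMonoid α] : Set (Fac α × Fac α) :=
  {p | piF p.1 = piF p.2 ∧ Multiset.card p.1 = Multiset.card p.2}

/-- The monoid of monotone relations of `H`. -/
def relMonMon (α : Type*) [CancelCommMonoid α] : Set (Fac α × Fac α) :=
  {p | piF p.1 = piF p.2 ∧ Multiset.card p.1 ≤ Multiset.card p.2}

/-- `p` is an atom (irreducible element) of the reduced submonoid `S` of `Z(H) × Z(H)`. -/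
def IsAtomIn (S : Set (Fac α × Fac α)) (p : Fac α × Fac α) : Prop :=
  p ∈ S ∧ p ≠ 0 ∧ ∀ q ∈ S, ∀ r ∈ S, p = q + r → q = 0 ∨ r = 0

/-- `A_a(S) = A(S) ∩ (Z(a) × Z(a))`. -/
def AtomsAt (S : Set (Fac α × Fac α)) (a : α) : Set (Fac α × Fac α) :=
  {p | IsAtomIn S p ∧ p.1 ∈ Z a ∧ p.2 ∈ Z a}

/-- The tame degree `t(a, x)`. -/
noncomputable def tdeg (a : α) (x : Fac α) : ℕ∞ :=
  sInf {N : ℕ∞ | ∀ z ∈ Z a, (∃ w ∈ Z a, x ≤ w) →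
    ∃ z' ∈ Z a, x ≤ z' ∧ (d z z' : ℕ∞) ≤ N}

/-- The tame degree `t(H) = sup{t(a, u) : a ∈ H, u ∈ A(H)}`. -/
noncomputable def tH (α : Type*) [CancelCommMonoid α] : ℕ∞ :=
  ⨆ (a : α) (u : {u : α // Irreducible u}), tdeg a {u}

/-- The `m`-adjacent catenary degree of an element:
`c_{ad,m}(a) = sup{d(Z_k(a), Z_{[k-m,k)}(a)) : k ∈ L(a)}`. -/
noncomputable def cadm (m : ℕ) (a : α) : ℕ∞ :=
  sSup {r : ℕ∞ | ∃ k ∈ L a, r = (dS (Zk a k) (ZM a (Set.Ico (k - m) k)) : ℕ∞)}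

noncomputable def cadmH (α : Type*) [CancelCommMonoid α] (m : ℕ) : ℕ∞ := ⨆ a : α, cadm m a

/-- `μ_{ad,m}(a) = sup{k ∈ L(a) : d(Z_k(a), Z_{[k-m,k)}(a)) = k}`. -/
noncomputable def muadm (m : ℕ) (a : α) : ℕ∞ :=
  sSup {r : ℕ∞ | ∃ k ∈ L a, dS (Zk a k) (ZM a (Set.Ico (k - m) k)) = k ∧ r = (k : ℕ∞)}

noncomputable def muadmH (α : Type*) [CancelCommMonoid α] (m : ℕ) : ℕ∞ := ⨆ a : α, muadm m a

/-- `H` is reduced: the only unit is `1`. -/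
def Reduced (α : Type*) [CancelCommMonoid α] : Prop := ∀ a : α, IsUnit a → a = 1

/-- `H` is atomic: every element is a product of atoms. -/
def Atomic (α : Type*) [CancelCommMonoid α] : Prop := ∀ a : α, ∃ z : Fac α, piF z = a

/-- The ascending chain condition on principal ideals. -/
def ACCP (α : Type*) [CancelCommMonoid α] : Prop :=
  ∀ f : ℕ → α, (∀ n, f (n + 1) ∣ f n) → ∃ N, ∀ n, N ≤ n → f N ∣ f n

/-
Let `k < l` be adjacent lengths of `a` and let `x ∈ Z_k(a)`, `y ∈ Z_l(a)` realize
`D = d(Z_k(a), Z_l(a))`. Cancelling `g = gcd(x, y)` leaves factorizations `x'`, `y'` of a single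
element `b` with `|y'| = D`. Multiplying by `g` embeds `Z(b)` into `Z(a)`, shifting lengths by `|g|`
and preserving distances, so `|x'| < D` are adjacent lengths of `b` and every factorization of `b`
of length `|x'|` has distance at least `D`, hence exactly `D`, from every one of length `D`.
Thus `D ≤ μ_adj(b)`, which gives `c_adj(H) ≤ μ_adj(H)`; the other inequality is pointwise.
-/

lemma piF_add (s t : Fac α) : piF (s + t) = piF s * piF t := by
  simp [piF]

lemma d_eq [DecidableEq {u : α // Irreducible u}] (z z' : Fac α) :
    d z z' = max (Multiset.card (z - z')) (Multiset.card (z' - z)) := by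
  unfold d
  congr!

lemma d_comm (z z' : Fac α) : d z z' = d z' z := by
  classical
  simp only [d_eq, max_comm]

lemma d_add_left (g z z' : Fac α) : d (g + z) (g + z') = d z z' := by
  classical
  simp only [d_eq, add_tsub_add_eq_tsub_left]

lemma d_le_max_card (z z' : Fac α) : d z z' ≤ max (Multiset.card z) (Multiset.card z') := by
  classical
  rw [d_eq]
  exact max_le_max (Multiset.card_le_card tsub_le_self) (Multiset.card_le_card tsub_le_self)

lemma d_eq_card_tsub_of_card_le [DecidableEq {u : α // Irreducible u}] {z z' : Fac α}
    (h : Multiset.card z ≤ Multiset.card z') : d z z' = Multiset.card (z' - z) := by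
  have hz := congrArg Multiset.card (Multiset.sub_add_inter z z')
  have hz' := congrArg Multiset.card (Multiset.sub_add_inter z' z)
  rw [Multiset.card_add, Multiset.inter_comm] at hz'
  rw [Multiset.card_add] at hz
  rw [d_eq, max_eq_right]
  omega

lemma dS_comm (X Y : Set (Fac α)) : dS X Y = dS Y X := by
  unfold dS
  congr 1
  ext n
  constructor <;> rintro ⟨x, hx, y, hy, rfl⟩ <;> exact ⟨y, hy, x, hx, d_comm _ _⟩

lemma dS_le_d {X Y : Set (Fac α)} {x y : Fac α} (hx : x ∈ X) (hy : y ∈ Y) : dS X Y ≤ d x y :=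
  Nat.sInf_le ⟨x, hx, y, hy, rfl⟩

lemma exists_d_eq_dS {X Y : Set (Fac α)} (hX : X.Nonempty) (hY : Y.Nonempty) :
    ∃ x ∈ X, ∃ y ∈ Y, d x y = dS X Y := by
  obtain ⟨x, hx⟩ := hX
  obtain ⟨y, hy⟩ := hY
  exact Nat.sInf_mem (s := {n | ∃ x ∈ X, ∃ y ∈ Y, d x y = n}) ⟨d x y, x, hx, y, hy, rfl⟩

lemma dS_le_dS_of_add_mem {X Y X' Y' : Set (Fac α)} (g : Fac α) (hX : X.Nonempty)
    (hY : Y.Nonempty) (hXX' : ∀ x ∈ X, g + x ∈ X') (hYY' : ∀ y ∈ Y, g + y ∈ Y') :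
    dS X' Y' ≤ dS X Y := by
  obtain ⟨x, hx, y, hy, hxy⟩ := exists_d_eq_dS hX hY
  calc dS X' Y' ≤ d (g + x) (g + y) := dS_le_d (hXX' x hx) (hYY' y hy)
    _ = dS X Y := by rw [d_add_left, hxy]

lemma Zk_nonempty {a : α} {k : ℕ} (hk : k ∈ L a) : (Zk a k).Nonempty :=
  let ⟨z, hz, hzk⟩ := hk
  ⟨z, hz, hzk⟩

lemma dS_Zk_le {a : α} {j k : ℕ} (hj : j ∈ L a) (hk : k ∈ L a) (hjk : j ≤ k) :
    dS (Zk a k) (Zk a j) ≤ k := by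
  obtain ⟨w, hw⟩ := Zk_nonempty hk
  obtain ⟨v, hv⟩ := Zk_nonempty hj
  calc dS (Zk a k) (Zk a j) ≤ d w v := dS_le_d hw hv
    _ ≤ max k j := by simpa only [hw.2, hv.2] using d_le_max_card w v
    _ = k := max_eq_left hjk

lemma add_mem_Zk {a b : α} {g w : Fac α} {j : ℕ} (hab : piF g * b = a) (hw : w ∈ Zk b j) :
    g + w ∈ Zk a (Multiset.card g + j) := by
  obtain ⟨hwb, hwj⟩ := hw
  refine ⟨?_, by rw [Multiset.card_add, hwj]⟩
  change piF (g + w) = a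
  rw [piF_add, show piF w = b from hwb, hab]

lemma add_mem_L {a b : α} {g : Fac α} {j : ℕ} (hab : piF g * b = a) (hj : j ∈ L b) :
    Multiset.card g + j ∈ L a :=
  let ⟨w, hw⟩ := Zk_nonempty hj
  let ⟨hwa, hwj⟩ := add_mem_Zk hab hw
  ⟨g + w, hwa, hwj⟩

lemma Adjacent.of_mul {a b : α} {g : Fac α} {i j : ℕ} (hab : piF g * b = a) (hi : i ∈ L b)
    (hj : j ∈ L b) (hij : i < j) (h : Adjacent a (Multiset.card g + i) (Multiset.card g + j)) :
    Adjacent b i j := by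
  refine ⟨hi, hj, hij, fun m hm him hmj => ?_⟩
  have := h.2.2.2 _ (add_mem_L hab hm) (by omega) (by omega)
  omega

theorem exists_adjacent_dS_eq_self {a : α} {k l : ℕ} (h : Adjacent a k l) :
    ∃ (b : α) (j : ℕ), Adjacent b j (dS (Zk a k) (Zk a l)) ∧
      dS (Zk b (dS (Zk a k) (Zk a l))) (Zk b j) = dS (Zk a k) (Zk a l) := by
  classical
  obtain ⟨x, hx, y, hy, hxy⟩ := exists_d_eq_dS (Zk_nonempty h.1) (Zk_nonempty h.2.1)
  set D := dS (Zk a k) (Zk a l)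
  have hgx : x ∩ y + (x - y) = x := by rw [add_comm]; exact Multiset.sub_add_inter x y
  have hgy : x ∩ y + (y - x) = y := by
    rw [add_comm, Multiset.inter_comm]; exact Multiset.sub_add_inter y x
  set g := x ∩ y
  set b := piF (y - x)
  have hgb : piF g * b = a := by rw [← piF_add, hgy]; exact hy.1
  have hxb : piF (x - y) = b := by
    refine mul_left_cancel (a := piF g) ?_
    rw [← piF_add, hgx, hgb]; exact hx.1
  have hyD : Multiset.card (y - x) = D := by
    rw [← hxy, d_eq_card_tsub_of_card_le (by rw [hx.2, hy.2]; exact h.2.2.1.le)]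
  have hgk : Multiset.card g + Multiset.card (x - y) = k := by
    rw [← Multiset.card_add, hgx, hx.2]
  have hgl : Multiset.card g + D = l := by rw [← hyD, ← Multiset.card_add, hgy, hy.2]
  have hxL : Multiset.card (x - y) ∈ L b := ⟨x - y, hxb, rfl⟩
  have hyL : D ∈ L b := ⟨y - x, rfl, hyD⟩
  have hxyD : Multiset.card (x - y) < D := by have := h.2.2.1; omega
  refine ⟨b, _, Adjacent.of_mul hgb hxL hyL hxyD (by rwa [hgk, hgl]),
    le_antisymm (dS_Zk_le hxL hyL hxyD.le) ?_⟩
  calc D = dS (Zk a l) (Zk a k) := dS_comm _ _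
    _ ≤ _ := dS_le_dS_of_add_mem g (Zk_nonempty hyL) (Zk_nonempty hxL)
        (fun w hw => hgl ▸ add_mem_Zk hgb hw) (fun v hv => hgk ▸ add_mem_Zk hgb hv)

lemma muadj_le_cadj (a : α) : muadj a ≤ cadj a :=
  sSup_le fun _ ⟨_, _, ⟨l, hlk, hd⟩, hr⟩ => le_sSup ⟨l, _, hlk, by rw [hr, dS_comm, hd]⟩

lemma cadj_le_muadjH (a : α) : cadj a ≤ muadjH α := by
  refine sSup_le fun _ ⟨k, l, hkl, hr⟩ => ?_
  obtain ⟨b, j, hjD, hD⟩ := exists_adjacent_dS_eq_self hkl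
  rw [hr]
  exact (le_sSup ⟨_, hjD.2.1, ⟨j, hjD, hD⟩, rfl⟩ : _ ≤ muadj b).trans (le_iSup muadj b)

theorem stmt6_general {α : Type*} [CancelCommMonoid α] :
    (∀ a : α, muadj a ≤ cadj a) ∧ cadjH α = muadjH α :=
  ⟨muadj_le_cadj, le_antisymm (iSup_le cadj_le_muadjH) (iSup_mono muadj_le_cadj)⟩

/-- Let `H` be a reduced, commutative, cancellative, atomic monoid. Then
`c_adj(a) ≥ μ_adj(a)` for every `a ∈ H`, and `c_adj(H) = μ_adj(H)`. -/
theorem stmt6 {α : Type*} [CancelCommMonoid α]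
    (hred : Reduced α) (hatomic : Atomic α) :
    (∀ a : α, muadj a ≤ cadj a) ∧ cadjH α = muadjH α :=
  stmt6_general

end CMR
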